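/- The moments of the arcsine distribution on [-2,2] are: ∫ x^{2k} dμ = binom(2k, k) and all odd moments vanish. -/
import Mathlib

open MeasureTheory Real

/-- The arcsine distribution on [-2, 2], with density 1/(π√(4 - x²)). -/
noncomputable def arcsineDist : Measure ℝ :=
  (volume.restrict (Set.Ioo (-2 : ℝ) 2)).withDensity
    (fun x => ENNReal.ofReal (1 / (π * Real.sqrt (4 - x ^ 2))))


lemma sin_image_aux :
    (fun θ : ℝ => 2 * Real.sin θ) '' Set.Ioo (-(π/2)) (π/2) = Set.Ioo (-2 : ℝ) 2 := by
  ext y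
  constructor
  · rintro ⟨θ, hθ, rfl⟩
    have h1 : Real.sin θ < 1 := by
      have := Real.strictMonoOn_sin (Set.mem_Icc.2 ⟨hθ.1.le, hθ.2.le⟩)
        (Set.mem_Icc.2 ⟨by linarith [pi_pos], le_refl (π/2)⟩) hθ.2
      simpa using this
    have h2 : -1 < Real.sin θ := by
      have := Real.strictMonoOn_sin (Set.mem_Icc.2 ⟨le_refl (-(π/2)), by linarith [pi_pos]⟩)
        (Set.mem_Icc.2 ⟨hθ.1.le, hθ.2.le⟩) hθ.1
      simpa using this
    simp only [Set.mem_Ioo]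
    constructor <;> nlinarith
  · intro hy
    refine ⟨Real.arcsin (y / 2), ⟨?_, ?_⟩, ?_⟩
    · exact Real.neg_pi_div_two_lt_arcsin.2 (by linarith [hy.1])
    · exact Real.arcsin_lt_pi_div_two.2 (by linarith [hy.2])
    · show 2 * Real.sin (Real.arcsin (y / 2)) = y
      rw [Real.sin_arcsin (by linarith [hy.1]) (by linarith [hy.2])]
      ring


lemma sin_pow_rec (n : ℕ) :
    (∫ x in (-(π/2))..(π/2), Real.sin x ^ (n + 2)) =
      (n + 1) / (n + 2) * ∫ x in (-(π/2))..(π/2), Real.sin x ^ n := by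
  rw [integral_sin_pow]
  simp [Real.cos_pi_div_two]

lemma sin_pow_odd (k : ℕ) : (∫ x in (-(π/2))..(π/2), Real.sin x ^ (2 * k + 1)) = 0 := by
  induction k with
  | zero => simp [integral_sin, Real.cos_pi_div_two]
  | succ k ih =>
      have : 2 * (k + 1) + 1 = (2 * k + 1) + 2 := by ring
      rw [this, sin_pow_rec, ih, mul_zero]

lemma sin_pow_even (k : ℕ) :
    (2:ℝ) ^ (2 * k) / π * ∫ x in (-(π/2))..(π/2), Real.sin x ^ (2 * k) =
      (Nat.centralBinom k : ℝ) := by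
  induction k with
  | zero =>
      simp [Nat.centralBinom]
  | succ k ih =>
      have h2 : 2 * (k + 1) = (2 * k) + 2 := by ring
      rw [h2, sin_pow_rec]
      have hπ : (π : ℝ) ≠ 0 := Real.pi_ne_zero
      have hcb : ((k : ℝ) + 1) * (Nat.centralBinom (k + 1) : ℝ)
          = 2 * (2 * k + 1) * (Nat.centralBinom k : ℝ) := by
        exact_mod_cast congrArg (Nat.cast : ℕ → ℝ) (Nat.succ_mul_centralBinom_succ k)
      have hk1 : (k : ℝ) + 1 ≠ 0 := by positivity
      push_cast
      calc (2:ℝ) ^ (2 * k + 2) / π *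
            (((2 * k : ℝ) + 1) / ((2 * k : ℝ) + 2) * ∫ x in (-(π/2))..(π/2), Real.sin x ^ (2 * k))
          = (4 * ((2 * k : ℝ) + 1) / ((2 * k : ℝ) + 2)) *
            ((2:ℝ) ^ (2 * k) / π * ∫ x in (-(π/2))..(π/2), Real.sin x ^ (2 * k)) := by
            rw [pow_add]; ring
        _ = 4 * ((2 * k : ℝ) + 1) / ((2 * k : ℝ) + 2) * (Nat.centralBinom k : ℝ) := by rw [ih]
        _ = (Nat.centralBinom (k + 1) : ℝ) := by
            have h22 : ((2 * k : ℝ) + 2) ≠ 0 := by positivity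
            field_simp
            linear_combination (-2 : ℝ) * hcb

lemma moment_eq (n : ℕ) :
    ∫ x : ℝ, x ^ n ∂arcsineDist
      = (2:ℝ) ^ n / π * ∫ x in (-(π/2))..(π/2), Real.sin x ^ n := by
  have hmeas : Measurable fun x : ℝ => (1 / (π * Real.sqrt (4 - x ^ 2))).toNNReal := by
    apply Measurable.real_toNNReal
    exact measurable_const.div (measurable_const.mul
      (Real.continuous_sqrt.measurable.comp (measurable_const.sub (measurable_id.pow_const 2))))
  have hrfl : arcsineDist = (volume.restrict (Set.Ioo (-2 : ℝ) 2)).withDensity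
      (fun x => ((1 / (π * Real.sqrt (4 - x ^ 2))).toNNReal : ENNReal)) := rfl
  rw [hrfl, integral_withDensity_eq_integral_smul hmeas]
  have hnn : ∀ x : ℝ, 0 ≤ 1 / (π * Real.sqrt (4 - x ^ 2)) := fun x =>
    div_nonneg one_pos.le (mul_nonneg Real.pi_pos.le (Real.sqrt_nonneg _))
  have keq : (∫ x : ℝ, (1 / (π * Real.sqrt (4 - x ^ 2))).toNNReal • x ^ n
        ∂(volume.restrict (Set.Ioo (-2:ℝ) 2)))
      = ∫ x in Set.Ioo (-2:ℝ) 2, 1 / (π * Real.sqrt (4 - x ^ 2)) * x ^ n := by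
    refine integral_congr_ae (Filter.Eventually.of_forall fun x => ?_)
    simp only [NNReal.smul_def, Real.coe_toNNReal _ (hnn x), smul_eq_mul]
  rw [keq, ← sin_image_aux]
  have hs : MeasurableSet (Set.Ioo (-(π/2)) (π/2)) := measurableSet_Ioo
  have hderiv : ∀ θ ∈ Set.Ioo (-(π/2)) (π/2),
      HasDerivWithinAt (fun θ : ℝ => 2 * Real.sin θ) (2 * Real.cos θ)
        (Set.Ioo (-(π/2)) (π/2)) θ := fun θ _ =>
    ((Real.hasDerivAt_sin θ).const_mul 2).hasDerivWithinAt
  have hinj : Set.InjOn (fun θ : ℝ => 2 * Real.sin θ) (Set.Ioo (-(π/2)) (π/2)) := by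
    intro a ha b hb h
    exact Real.injOn_sin (Set.mem_Icc.2 ⟨ha.1.le, ha.2.le⟩)
      (Set.mem_Icc.2 ⟨hb.1.le, hb.2.le⟩) (by
        have h' : 2 * Real.sin a = 2 * Real.sin b := h
        linarith)
  rw [integral_image_eq_integral_abs_deriv_smul hs hderiv hinj]
  have congr2 : ∫ θ in Set.Ioo (-(π/2)) (π/2),
        |2 * Real.cos θ| • (1 / (π * Real.sqrt (4 - (2 * Real.sin θ) ^ 2)) * (2 * Real.sin θ) ^ n)
      = ∫ θ in Set.Ioo (-(π/2)) (π/2), (2:ℝ) ^ n / π * Real.sin θ ^ n := by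
    refine setIntegral_congr_fun hs fun θ hθ => ?_
    have hc : 0 < Real.cos θ := Real.cos_pos_of_mem_Ioo hθ
    have hsq : 4 - (2 * Real.sin θ) ^ 2 = (2 * Real.cos θ) ^ 2 := by
      linear_combination (-4 : ℝ) * (Real.sin_sq_add_cos_sq θ)
    rw [hsq, Real.sqrt_sq (by positivity), abs_of_pos (by positivity)]
    have hπ : π ≠ 0 := Real.pi_ne_zero
    rw [smul_eq_mul, mul_pow]
    field_simp
  rw [congr2, ← integral_Ioc_eq_integral_Ioo,
    ← intervalIntegral.integral_of_le (by linarith [Real.pi_pos] : -(π/2) ≤ π/2),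
    intervalIntegral.integral_const_mul]

theorem moments_arcsine (k : ℕ) :
    (∫ x : ℝ, x ^ (2 * k) ∂arcsineDist = (Nat.choose (2 * k) k : ℝ)) ∧
    (∫ x : ℝ, x ^ (2 * k + 1) ∂arcsineDist = 0) := by
  constructor
  · rw [moment_eq, sin_pow_even]
    rfl
  · rw [moment_eq, sin_pow_odd, mul_zero]
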